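/- Define M(ε,α) = ε(1+α²) + (1−ε)[2(1+α²)Φ(−α) − 2αφ(α)] for ε ∈ (0,1) and α ≥ 0. Then for any probability measure p₀ on ℝ with p₀({0}) ≥ 1−ε, and X₀ ∼ p₀, Z ∼ N(0,1) independent: E[(η(X₀ + σZ; ασ) − X₀)²] ≤ M(ε,α)·σ² for every σ > 0. -/

import Mathlib

/-!
Write `η(y; θ) = y - clip θ y` with `clip θ` the projection onto `[-θ, θ]`. For every `x` the
error `η(x + σZ; θ) - x = σZ - clip θ (x + σZ)` has second moment at most `σ² + θ²`, because the
cross term `E[Z · clip θ (x + σZ)]` is the covariance of two nondecreasing functions of `Z`, hence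
nonnegative. At `x = 0` the risk is `σ²` times the explicit value
`2(1 + α²)Φ(-α) - 2αφ(α)`, obtained from Gaussian tail integrals. Averaging over `p₀`, the atom at
`0` has mass at least `1 - ε` and the remaining mass is at most `ε`; since the risk at `0` is
below the uniform bound `(1 + α²)σ²`, the average is at most `ε (1 + α²)σ² + (1 - ε) r(0)`.
-/

open MeasureTheory ProbabilityTheory

/-- Soft thresholding function η(y;θ) = sign(y)·max(|y|−θ, 0). -/
noncomputable def softThr (y θ : ℝ) : ℝ := Real.sign y * max (|y| - θ) 0

/-- Standard Gaussian density φ. -/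
noncomputable def stdGaussPDF (z : ℝ) : ℝ := Real.exp (-z^2/2) / Real.sqrt (2*Real.pi)

/-- Standard Gaussian CDF Φ. -/
noncomputable def stdGaussCDF (z : ℝ) : ℝ := ∫ u in Set.Iic z, stdGaussPDF u

/-- Worst-case soft thresholding MSE M(ε,α). -/
noncomputable def Mrisk (ε α : ℝ) : ℝ :=
  ε*(1+α^2) + (1-ε)*(2*(1+α^2) * stdGaussCDF (-α) - 2*α * stdGaussPDF α)

open Real Set

noncomputable def clip (θ y : ℝ) : ℝ := max (-θ) (min y θ)

section SoftThreshold

variable {θ : ℝ}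

lemma softThr_eq_sub_clip (hθ : 0 ≤ θ) (y : ℝ) : softThr y θ = y - clip θ y := by
  unfold softThr clip
  rcases lt_trichotomy y 0 with hy | rfl | hy
  · rw [Real.sign_of_neg hy, abs_of_neg hy, min_eq_left (by linarith)]
    rcases le_or_gt (-θ) y with h | h
    · rw [max_eq_right (by linarith), max_eq_right h]; ring
    · rw [max_eq_left (by linarith), max_eq_left h.le]; ring
  · simp [hθ]
  · rw [Real.sign_of_pos hy, abs_of_pos hy]
    rcases le_or_gt θ y with h | h
    · rw [min_eq_right h, max_eq_left (by linarith : 0 ≤ y - θ),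
        max_eq_right (by linarith : -θ ≤ θ)]; ring
    · rw [min_eq_left h.le, max_eq_right (by linarith : y - θ ≤ 0),
        max_eq_right (by linarith : -θ ≤ y)]; ring

lemma monotone_clip (θ : ℝ) : Monotone (clip θ) :=
  monotone_const.max (monotone_id.min monotone_const)

@[fun_prop]
lemma continuous_clip (θ : ℝ) : Continuous (clip θ) :=
  continuous_const.max (continuous_id.min continuous_const)

lemma abs_clip_le (hθ : 0 ≤ θ) (y : ℝ) : |clip θ y| ≤ θ :=
  abs_le.2 ⟨le_max_left _ _, max_le (by linarith) (min_le_right _ _)⟩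

lemma softThr_mul {σ : ℝ} (hσ : 0 ≤ σ) (z α : ℝ) :
    softThr (σ * z) (α * σ) = σ * softThr z α := by
  have hmax : max (|σ * z| - α * σ) 0 = σ * max (|z| - α) 0 := by
    rw [abs_mul, abs_of_nonneg hσ, mul_max_of_nonneg _ _ hσ, mul_zero, mul_sub, mul_comm α]
  unfold softThr
  rw [hmax]
  rcases hσ.eq_or_lt with rfl | hσ
  · simp
  have hsign : Real.sign (σ * z) = Real.sign z := by
    rcases lt_trichotomy z 0 with hz | rfl | hz
    · rw [Real.sign_of_neg hz, Real.sign_of_neg (mul_neg_of_pos_of_neg hσ hz)]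
    · simp
    · rw [Real.sign_of_pos hz, Real.sign_of_pos (mul_pos hσ hz)]
  rw [hsign]; ring

lemma sq_softThr_eq {α : ℝ} (hα : 0 ≤ α) (z : ℝ) :
    softThr z α ^ 2 = max (z - α) 0 ^ 2 + max (-z - α) 0 ^ 2 := by
  unfold softThr
  rcases lt_trichotomy z 0 with hz | rfl | hz
  · rw [Real.sign_of_neg hz, abs_of_neg hz, max_eq_right (by linarith : z - α ≤ 0)]; ring
  · simp [hα]
  · rw [Real.sign_of_pos hz, abs_of_pos hz, max_eq_right (by linarith : -z - α ≤ 0)]; ring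

end SoftThreshold

lemma gaussianPDFReal_zero_one : gaussianPDFReal 0 1 = stdGaussPDF := by
  ext z
  simp [gaussianPDFReal, stdGaussPDF, div_eq_inv_mul]

lemma integral_gaussianReal_eq_integral_stdGaussPDF_mul (f : ℝ → ℝ) :
    ∫ z, f z ∂gaussianReal 0 1 = ∫ z, stdGaussPDF z * f z := by
  simp [integral_gaussianReal_eq_integral_smul one_ne_zero, gaussianPDFReal_zero_one]

lemma stdGaussPDF_neg (z : ℝ) : stdGaussPDF (-z) = stdGaussPDF z := by
  simp [stdGaussPDF]

lemma hasDerivAt_stdGaussPDF (z : ℝ) : HasDerivAt stdGaussPDF (-z * stdGaussPDF z) z := by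
  have h : HasDerivAt (fun x : ℝ => -x ^ 2 / 2) (-z) z :=
    ((hasDerivAt_pow 2 z).neg.div_const 2).congr_deriv (by ring)
  exact (h.exp.div_const (√(2 * π))).congr_deriv (by unfold stdGaussPDF; ring)

lemma integrable_pow_mul_stdGaussPDF (n : ℕ) : Integrable fun z => z ^ n * stdGaussPDF z := by
  have h := (integrable_rpow_mul_exp_neg_mul_sq (b := 1 / 2) (by norm_num)
    (s := n) (by linarith [n.cast_nonneg (α := ℝ)])).div_const (√(2 * π))
  convert h using 2 with z
  rw [Real.rpow_natCast, stdGaussPDF, mul_div_assoc]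
  ring_nf

lemma integral_Ioi_stdGaussPDF (a : ℝ) : ∫ z in Ioi a, stdGaussPDF z = stdGaussCDF (-a) := by
  have h := integral_comp_neg_Iic (-a) stdGaussPDF
  simp only [neg_neg, stdGaussPDF_neg] at h
  exact h.symm

/-- Since `φ' = -z φ`, the function `(2a - z) φ(z)` is an antiderivative of
`((z - a)² - 1 - a²) φ(z)`, and it vanishes at `+∞`. -/
lemma integral_Ioi_sub_sq_mul_stdGaussPDF (a : ℝ) :
    ∫ z in Ioi a, (z - a) ^ 2 * stdGaussPDF z =
      (1 + a ^ 2) * stdGaussCDF (-a) - a * stdGaussPDF a := by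
  let F : ℝ → ℝ := fun z => (2 * a - z) * stdGaussPDF z
  let F' : ℝ → ℝ := fun z => (z - a) ^ 2 * stdGaussPDF z - (1 + a ^ 2) * stdGaussPDF z
  have hderiv : ∀ z, HasDerivAt F (F' z) z := fun z =>
    (((hasDerivAt_id z).const_sub (2 * a)).mul (hasDerivAt_stdGaussPDF z)).congr_deriv
      (by simp only [F', id]; ring)
  have hint := integrable_pow_mul_stdGaussPDF
  have hφ : Integrable stdGaussPDF := by simpa using hint 0
  have hsq : Integrable fun z => (z - a) ^ 2 * stdGaussPDF z :=
    (((hint 2).sub ((hint 1).const_mul (2 * a))).add (hφ.const_mul (a ^ 2))).congr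
      (.of_forall fun z => by simp only [Pi.add_apply, Pi.sub_apply]; ring)
  have hF : Integrable F :=
    ((hφ.const_mul (2 * a)).sub (hint 1)).congr
      (.of_forall fun z => by simp only [F, Pi.sub_apply]; ring)
  have hF' : Integrable F' := hsq.sub (hφ.const_mul _)
  have hftc : ∫ z in Ioi a, F' z = 0 - F a :=
    integral_Ioi_of_hasDerivAt_of_tendsto' (fun z _ => hderiv z) hF'.integrableOn
      (tendsto_zero_of_hasDerivAt_of_integrableOn_Ioi (a := a) (fun z _ => hderiv z)
        hF'.integrableOn hF.integrableOn)
  rw [integral_sub hsq.integrableOn (hφ.const_mul _).integrableOn, integral_const_mul,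
    integral_Ioi_stdGaussPDF] at hftc
  simp only [F] at hftc
  linarith

section CenteredGaussian

variable {v : NNReal}

lemma measurePreserving_neg_gaussianReal :
    MeasurePreserving (fun z : ℝ => -z) (gaussianReal 0 v) (gaussianReal 0 v) :=
  ⟨measurable_neg, by simpa using gaussianReal_map_neg (μ := 0) (v := v)⟩

lemma integral_comp_neg_gaussianReal (f : ℝ → ℝ) :
    ∫ z, f (-z) ∂gaussianReal 0 v = ∫ z, f z ∂gaussianReal 0 v :=
  measurePreserving_neg_gaussianReal.integral_comp (Homeomorph.neg ℝ).measurableEmbedding f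

lemma integral_sq_gaussianReal : ∫ z, z ^ 2 ∂gaussianReal 0 v = v := by
  rw [← variance_id_gaussianReal (μ := 0),
    variance_of_integral_eq_zero aemeasurable_id integral_id_gaussianReal]
  rfl

lemma integrable_max_sub_sq_gaussianReal (a : ℝ) :
    Integrable (fun z => max (z - a) 0 ^ 2) (gaussianReal 0 v) := by
  refine ((memLp_id_gaussianReal 2).sub (memLp_const a)).integrable_sq.mono' (by fun_prop)
    (.of_forall fun z => ?_)
  rw [Real.norm_of_nonneg (sq_nonneg _)]
  rcases le_total (z - a) 0 with h | h
  · simp [max_eq_right h, sq_nonneg]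
  · simp [max_eq_left h]

end CenteredGaussian

lemma integral_max_sub_sq_gaussianReal (a : ℝ) :
    ∫ z, max (z - a) 0 ^ 2 ∂gaussianReal 0 1 =
      (1 + a ^ 2) * stdGaussCDF (-a) - a * stdGaussPDF a := by
  rw [integral_gaussianReal_eq_integral_stdGaussPDF_mul, ← integral_Ioi_sub_sq_mul_stdGaussPDF,
    ← setIntegral_eq_integral_of_forall_compl_eq_zero (s := Ioi a) fun z hz => by
      simp [max_eq_right (sub_nonpos.2 (notMem_Ioi.1 hz))]]
  refine setIntegral_congr_fun measurableSet_Ioi fun z hz => ?_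
  simp only [max_eq_left (sub_nonneg.2 (mem_Ioi.1 hz).le)]
  ring

lemma integral_sq_softThr_gaussianReal {α : ℝ} (hα : 0 ≤ α) :
    ∫ z, softThr z α ^ 2 ∂gaussianReal 0 1 =
      2 * (1 + α ^ 2) * stdGaussCDF (-α) - 2 * α * stdGaussPDF α := by
  have hint := integrable_max_sub_sq_gaussianReal (v := 1) α
  have hint_neg : Integrable (fun z => max (-z - α) 0 ^ 2) (gaussianReal 0 1) :=
    measurePreserving_neg_gaussianReal.integrable_comp_of_integrable hint
  simp_rw [sq_softThr_eq hα]
  rw [integral_add hint hint_neg,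
    integral_comp_neg_gaussianReal (fun z => max (z - α) 0 ^ 2), integral_max_sub_sq_gaussianReal]
  ring

lemma integral_mul_nonneg_of_monotone {μ : Measure ℝ} (hid : Integrable (fun z => z) μ)
    (hmean : ∫ z, z ∂μ = 0) {f : ℝ → ℝ} (hf : Monotone f) {C : ℝ} (hC : ∀ z, |f z| ≤ C) :
    0 ≤ ∫ z, z * f z ∂μ := by
  have hint : Integrable (fun z => z * f z) μ :=
    hid.mul_bdd hf.measurable.aestronglyMeasurable (.of_forall hC)
  have hcenter : ∫ z, z * f z ∂μ = ∫ z, z * (f z - f 0) ∂μ := by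
    simp_rw [mul_sub]
    rw [integral_sub hint (hid.mul_const _), integral_mul_const, hmean, zero_mul, sub_zero]
  rw [hcenter]
  refine integral_nonneg fun z => ?_
  rcases le_total 0 z with hz | hz
  · exact mul_nonneg hz (sub_nonneg.2 (hf hz))
  · exact mul_nonneg_of_nonpos_of_nonpos hz (sub_nonpos.2 (hf hz))

lemma integral_le_of_le_of_measure_singleton_ge {X : Type*} [MeasurableSpace X]
    [MeasurableSingletonClass X] {p : Measure X} [IsProbabilityMeasure p] {r : X → ℝ}
    (hr : Integrable r p) {a : X} {B ε : ℝ} (hB : ∀ x, r x ≤ B)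
    (hp : ENNReal.ofReal (1 - ε) ≤ p {a}) :
    ∫ x, r x ∂p ≤ ε * B + (1 - ε) * r a := by
  have hm : 1 - ε ≤ p.real {a} := (ENNReal.ofReal_le_iff_le_toReal (measure_ne_top _ _)).1 hp
  have hcompl : ∫ x in {a}ᶜ, r x ∂p ≤ (1 - p.real {a}) * B :=
    calc ∫ x in {a}ᶜ, r x ∂p ≤ ∫ _ in {a}ᶜ, B ∂p :=
          setIntegral_mono hr.integrableOn (integrable_const B) hB
      _ = (1 - p.real {a}) * B := by
          rw [setIntegral_const, probReal_compl_eq_one_sub (measurableSet_singleton a),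
            smul_eq_mul]
  rw [← integral_add_compl (measurableSet_singleton a) hr, integral_singleton, smul_eq_mul]
  nlinarith [mul_le_mul_of_nonneg_right hm (sub_nonneg.2 (hB a))]

noncomputable def softThrRisk (θ σ x : ℝ) : ℝ :=
  ∫ z, (softThr (x + σ * z) θ - x) ^ 2 ∂gaussianReal 0 1

section Risk

variable {θ σ : ℝ}

lemma softThrRisk_nonneg (x : ℝ) : 0 ≤ softThrRisk θ σ x :=
  integral_nonneg fun _ => sq_nonneg _

lemma softThrRisk_le (hθ : 0 ≤ θ) (hσ : 0 ≤ σ) (x : ℝ) : softThrRisk θ σ x ≤ σ ^ 2 + θ ^ 2 := by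
  let c : ℝ → ℝ := fun z => clip θ (x + σ * z)
  have hc_mono : Monotone c := (monotone_clip θ).comp fun _ _ h => by gcongr
  have hc_bdd : ∀ z, |c z| ≤ θ := fun z => abs_clip_le hθ _
  have hid : Integrable (fun z => z) (gaussianReal 0 1) :=
    (memLp_id_gaussianReal 1).integrable le_rfl
  have hsq : Integrable (fun z => z ^ 2) (gaussianReal 0 1) :=
    (memLp_id_gaussianReal 2).integrable_sq
  have hcross : Integrable (fun z => z * c z) (gaussianReal 0 1) :=
    hid.mul_bdd hc_mono.measurable.aestronglyMeasurable (.of_forall hc_bdd)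
  have hc_sq : Integrable (fun z => c z ^ 2) (gaussianReal 0 1) :=
    .of_bound (hc_mono.measurable.pow_const 2).aestronglyMeasurable (θ ^ 2)
      (.of_forall fun z => by
        rw [Real.norm_of_nonneg (sq_nonneg _), ← sq_abs]
        exact pow_le_pow_left₀ (abs_nonneg _) (hc_bdd z) 2)
  have hlin : Integrable (fun z => σ ^ 2 * z ^ 2 - 2 * σ * (z * c z)) (gaussianReal 0 1) :=
    (hsq.const_mul _).sub (hcross.const_mul _)
  have hexpand : softThrRisk θ σ x = σ ^ 2 * ∫ z, z ^ 2 ∂gaussianReal 0 1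
      - 2 * σ * ∫ z, z * c z ∂gaussianReal 0 1 + ∫ z, c z ^ 2 ∂gaussianReal 0 1 := by
    have hpoint : ∀ z, (softThr (x + σ * z) θ - x) ^ 2
        = σ ^ 2 * z ^ 2 - 2 * σ * (z * c z) + c z ^ 2 := fun z => by
      rw [softThr_eq_sub_clip hθ]; ring
    simp_rw [softThrRisk, hpoint]
    rw [integral_add hlin hc_sq, integral_sub (hsq.const_mul _) (hcross.const_mul _),
      integral_const_mul, integral_const_mul]
  have hcov : 0 ≤ ∫ z, z * c z ∂gaussianReal 0 1 :=
    integral_mul_nonneg_of_monotone hid integral_id_gaussianReal hc_mono hc_bdd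
  have hc_sq_le : ∫ z, c z ^ 2 ∂gaussianReal 0 1 ≤ θ ^ 2 := by
    calc ∫ z, c z ^ 2 ∂gaussianReal 0 1 ≤ ∫ _, θ ^ 2 ∂gaussianReal 0 1 :=
          integral_mono hc_sq (integrable_const _) fun z => by
            rw [← sq_abs]; exact pow_le_pow_left₀ (abs_nonneg _) (hc_bdd z) 2
      _ = θ ^ 2 := by simp
  rw [hexpand, integral_sq_gaussianReal, NNReal.coe_one, mul_one]
  nlinarith [mul_nonneg hσ hcov]

lemma integrable_softThrRisk (hθ : 0 ≤ θ) (hσ : 0 ≤ σ) (p : Measure ℝ) [IsFiniteMeasure p] :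
    Integrable (softThrRisk θ σ) p := by
  have hcont : Continuous fun q : ℝ × ℝ => (softThr (q.1 + σ * q.2) θ - q.1) ^ 2 := by
    simp_rw [softThr_eq_sub_clip hθ]
    fun_prop
  refine .of_bound hcont.stronglyMeasurable.integral_prod_right'.aestronglyMeasurable
    (σ ^ 2 + θ ^ 2) (.of_forall fun x => ?_)
  rw [Real.norm_of_nonneg (softThrRisk_nonneg x)]
  exact softThrRisk_le hθ hσ x

lemma softThrRisk_zero (hσ : 0 ≤ σ) (α : ℝ) :
    softThrRisk (α * σ) σ 0 = σ ^ 2 * ∫ z, softThr z α ^ 2 ∂gaussianReal 0 1 := by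
  simp_rw [softThrRisk, zero_add, sub_zero, softThr_mul hσ, mul_pow]
  exact integral_const_mul _ _

end Risk

theorem soft_thresholding_minimax_bound_general (ε α σ : ℝ)
    (hα : 0 ≤ α) (hσ : 0 < σ)
    (p₀ : Measure ℝ) [IsProbabilityMeasure p₀]
    (hp : ENNReal.ofReal (1 - ε) ≤ p₀ {0}) :
    ∫ x, ∫ z, (softThr (x + σ*z) (α*σ) - x)^2 ∂(gaussianReal 0 1) ∂p₀ ≤
      Mrisk ε α * σ^2 := by
  have hθ : 0 ≤ α * σ := mul_nonneg hα hσ.le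
  have hbound : ∀ x, softThrRisk (α * σ) σ x ≤ (1 + α ^ 2) * σ ^ 2 := fun x =>
    (softThrRisk_le hθ hσ.le x).trans_eq (by ring)
  calc ∫ x, softThrRisk (α * σ) σ x ∂p₀
      ≤ ε * ((1 + α ^ 2) * σ ^ 2) + (1 - ε) * softThrRisk (α * σ) σ 0 :=
        integral_le_of_le_of_measure_singleton_ge (integrable_softThrRisk hθ hσ.le p₀) hbound hp
    _ = Mrisk ε α * σ ^ 2 := by
        rw [softThrRisk_zero hσ.le, integral_sq_softThr_gaussianReal hα, Mrisk]
        ring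

/-- For any ε-sparse prior p₀, E[(η(X₀+σZ;ασ)−X₀)²] ≤ M(ε,α)·σ². -/
theorem soft_thresholding_minimax_bound (ε α σ : ℝ)
    (hε : ε ∈ Set.Ioo (0:ℝ) 1) (hα : 0 ≤ α) (hσ : 0 < σ)
    (p₀ : Measure ℝ) [IsProbabilityMeasure p₀]
    (hp : ENNReal.ofReal (1 - ε) ≤ p₀ {0}) :
    ∫ x, ∫ z, (softThr (x + σ*z) (α*σ) - x)^2 ∂(gaussianReal 0 1) ∂p₀ ≤
      Mrisk ε α * σ^2 :=
  soft_thresholding_minimax_bound_general ε α σ hα hσ p₀ hp
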